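/- arXiv:1711.06369 — 2 statements merged into one kernel-verified Lean document; each statement's English description precedes it below -/
import Mathlib

section
/- Let Λ̌ = [[1,1],[1,1]]. Its Moore–Penrose pseudoinverse is Λ̌† = (1/4)[[1,1],[1,1]], and for ψ = diag(r₁, r₂) with E r₁² = E r₂² = 1, E r₁r₂ = 0, the matrix (E ψ Λ̌† ψ^T)^{-1} = 4·I ≠ 0. -/
open Matrix MeasureTheory

/-- the Moore–Penrose pseudoinverse of `Λ̌ = [[1,1],[1,1]]` is
`(1/4)[[1,1],[1,1]]` (characterized by the four Penrose conditions), and with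
`ψ = diag(r₁,r₂)`, `E rᵢrⱼ = δᵢⱼ`, one gets `(E ψ Λ̌† ψᵀ)⁻¹ = 4·I ≠ 0`. -/
theorem stmt8 (Ω : Type*) [MeasureSpace Ω] (μ : Measure Ω)
    (r : Fin 2 → Ω → ℝ)
    (hInt : ∀ i j, Integrable (fun ω => r i ω * r j ω) μ)
    (hcov : ∀ i j, (∫ ω, r i ω * r j ω ∂μ) = if i = j then 1 else 0) :
    (let A : Matrix (Fin 2) (Fin 2) ℝ := !![1, 1; 1, 1]
     let P : Matrix (Fin 2) (Fin 2) ℝ := (1 / 4 : ℝ) • !![1, 1; 1, 1]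
     A * P * A = A ∧ P * A * P = P ∧ (A * P)ᵀ = A * P ∧ (P * A)ᵀ = P * A) ∧
    (Matrix.of fun i j =>
        ∫ ω, r i ω * (((1 / 4 : ℝ) • !![1, 1; 1, 1] : Matrix (Fin 2) (Fin 2) ℝ) i j) *
          r j ω ∂μ)⁻¹ = (4 : ℝ) • (1 : Matrix (Fin 2) (Fin 2) ℝ) ∧
    (4 : ℝ) • (1 : Matrix (Fin 2) (Fin 2) ℝ) ≠ 0 := by
  have hM : (Matrix.of fun i j =>
        ∫ ω, r i ω * (((1 / 4 : ℝ) • !![1, 1; 1, 1] : Matrix (Fin 2) (Fin 2) ℝ) i j) *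
          r j ω ∂μ) = (1 / 4 : ℝ) • (1 : Matrix (Fin 2) (Fin 2) ℝ) := by
    ext i j
    have h1 : ∀ i j : Fin 2, ((1 / 4 : ℝ) • !![1, 1; 1, 1] : Matrix (Fin 2) (Fin 2) ℝ) i j = 1/4 := by
      intro i j; fin_cases i <;> fin_cases j <;> norm_num
    simp only [Matrix.of_apply, h1]
    have : (fun ω => r i ω * (1/4 : ℝ) * r j ω) = fun ω => (1/4 : ℝ) * (r i ω * r j ω) := by
      funext ω; ring
    rw [this, integral_const_mul, hcov]
    simp [Matrix.one_apply]
  refine ⟨?_, ?_, ?_⟩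
  · refine ⟨?_, ?_, ?_, ?_⟩ <;>
      · ext i j; fin_cases i <;> fin_cases j <;>
        simp [Matrix.mul_apply, Fin.sum_univ_two] <;> norm_num
  · rw [hM]
    apply Matrix.inv_eq_right_inv
    rw [smul_mul_smul_comm]
    norm_num
  · intro h
    have := congrFun (congrFun h 0) 0
    simp [Matrix.one_apply] at this
end

section
/- Let Ȟ⁰ be a square invertible rational matrix, G⁰ strictly proper with (I − G⁰) invertible. Then the network equation w = G⁰w + R⁰r + Ȟ⁰ě can be rewritten as w = (I − (Ȟ⁰)^{-1}(I − G⁰)) w + (Ȟ⁰)^{-1} R⁰ r + ě, and the filter W = I − (Ȟ⁰)^{-1}(I − G⁰) is strictly proper whenever Ȟ⁰ is monic (feedthrough I) and G⁰ is strictly proper. -/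
/-!
Substituting `ě = (Ȟ⁰)⁻¹((I - G⁰)w - R⁰r)`, solved from the network equation, gives the
predictor form. Feedthrough is a ring homomorphism on matrices, so it sends `(Ȟ⁰)⁻¹` to
`I⁻¹ = I` and `I - (Ȟ⁰)⁻¹(I - G⁰)` to `I - I·I = 0`.
-/

namespace Matrix

variable {m n R S : Type*} [Fintype m] [DecidableEq m] [CommRing R] [CommRing S]

theorem eq_predictor_form_of_eq [Fintype n] (G : Matrix m m R) (B : Matrix m n R)
    (H : Matrix m m R) [Invertible H] {w e : m → R} {r : n → R}
    (hw : w = G *ᵥ w + B *ᵥ r + H *ᵥ e) :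
    w = (1 - H⁻¹ * (1 - G)) *ᵥ w + (H⁻¹ * B) *ᵥ r + e := by
  have he : e = H⁻¹ *ᵥ ((1 - G) *ᵥ w - B *ᵥ r) := by
    refine (inv_mulVec_eq_vec ?_).symm
    rw [sub_mulVec, one_mulVec]
    linear_combination hw
  rw [he, mulVec_sub, mulVec_mulVec, mulVec_mulVec, sub_mulVec, one_mulVec]
  abel

theorem map_inv_eq_one_of_map_eq_one (f : R →+* S) (H : Matrix m m R) [Invertible H]
    (hH : H.map f = 1) : H⁻¹.map f = 1 := by
  have h := congrArg f.mapMatrix (inv_mul_of_invertible H)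
  rwa [map_mul, map_one, RingHom.mapMatrix_apply, RingHom.mapMatrix_apply, hH, mul_one] at h

theorem map_one_sub_inv_mul_one_sub_eq_zero (f : R →+* S) (G H : Matrix m m R) [Invertible H]
    (hG : G.map f = 0) (hH : H.map f = 1) : (1 - H⁻¹ * (1 - G)).map f = 0 := by
  change f.mapMatrix (1 - H⁻¹ * (1 - G)) = 0
  rw [map_sub, map_mul, map_sub, map_one, RingHom.mapMatrix_apply, RingHom.mapMatrix_apply, hG,
    map_inv_eq_one_of_map_eq_one f H hH]
  simp

end Matrix

/-- Proposition 1, predictor derivation: transfer matrices are modelled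
as matrices over `ℝ[[z⁻¹]]` (formal power series in the delay variable), so that the
feedthrough `lim_{z→∞}` is the constant-coefficient map.  If `Ȟ⁰` is square and
invertible, then the network equation `w = G⁰w + R⁰r + Ȟ⁰ě` can be rewritten as
`w = (I - (Ȟ⁰)⁻¹(I - G⁰))w + (Ȟ⁰)⁻¹R⁰r + ě`; moreover the predictor filter
`W = I - (Ȟ⁰)⁻¹(I - G⁰)` is strictly proper whenever `Ȟ⁰` is monic and `G⁰` is
strictly proper. -/
theorem stmt18 (L K : ℕ)
    (G : Matrix (Fin L) (Fin L) (PowerSeries ℝ))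
    (Rm : Matrix (Fin L) (Fin K) (PowerSeries ℝ))
    (H : Matrix (Fin L) (Fin L) (PowerSeries ℝ)) [Invertible H]
    (hG : G.map (PowerSeries.constantCoeff (R := ℝ)) = 0)
    (hH : H.map (PowerSeries.constantCoeff (R := ℝ)) = 1) :
    (∀ (w e : Fin L → PowerSeries ℝ) (r : Fin K → PowerSeries ℝ),
      w = G.mulVec w + Rm.mulVec r + H.mulVec e →
        w = (1 - H⁻¹ * (1 - G)).mulVec w + (H⁻¹ * Rm).mulVec r + e) ∧
    (1 - H⁻¹ * (1 - G)).map (PowerSeries.constantCoeff (R := ℝ)) = 0 :=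
  ⟨fun _ _ _ hw => Matrix.eq_predictor_form_of_eq G Rm H hw,
    Matrix.map_one_sub_inv_mul_one_sub_eq_zero _ G H hG hH⟩
end
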